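/- arXiv:2504.05935 — 2 statements merged into one kernel-verified Lean document; each statement's English description precedes it below -/
import Mathlib

section
/- Let m̂ ∈ P₂(ℝ^d), R > 0, φ ∈ UC_m̂, κ ∈ (0,1], ε > 0, m ∈ B_R(m̂), and let μ̄ be an Ekeland point for (φ,κ,ε,m). Then W₂(m,μ̄) ≤ M_κ^ε(R), where M_κ^ε(R) = κ√(2S(R)+ε²κ²) − εκ². -/
open MeasureTheory Set Filter Topology
open scoped ENNReal NNReal InnerProductSpace

noncomputable section

/-- `ℝ^d` with the Euclidean structure. -/
abbrev Ed (d : ℕ) : Type := EuclideanSpace ℝ (Fin d)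

/-- A Borel probability measure with finite second moment. -/
def IsP2Meas {E : Type*} [NormedAddCommGroup E] [MeasurableSpace E] (μ : Measure E) : Prop :=
  IsProbabilityMeasure μ ∧ ∫⁻ x, (‖x‖₊ : ℝ≥0∞) ^ 2 ∂μ < ⊤

/-- The Wasserstein space `P₂(ℝ^d)` of Borel probability measures with finite second moment. -/
def P2 (d : ℕ) : Type := {μ : Measure (Ed d) // IsP2Meas μ}

/-- `ς₂(μ)`, the square root of the second moment of `μ`. -/
def varsigma2 {d : ℕ} (μ : P2 d) : ℝ :=
  Real.sqrt (∫⁻ x, (‖x‖₊ : ℝ≥0∞) ^ 2 ∂μ.1).toReal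

/-- `π` is a plan (coupling) between `μ` and `ν`. -/
def IsCoupling {d : ℕ} (π : Measure (Ed d × Ed d)) (μ ν : P2 d) : Prop :=
  π.map Prod.fst = μ.1 ∧ π.map Prod.snd = ν.1

/-- The quadratic transport cost of a plan. -/
def Wcost {d : ℕ} (π : Measure (Ed d × Ed d)) : ℝ≥0∞ :=
  ∫⁻ p, (‖p.1 - p.2‖₊ : ℝ≥0∞) ^ 2 ∂π

/-- The 2-Wasserstein distance. -/
def W2 {d : ℕ} (μ ν : P2 d) : ℝ :=
  Real.sqrt (⨅ π ∈ {π : Measure (Ed d × Ed d) | IsCoupling π μ ν}, Wcost π).toReal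

/-- `π ∈ Π_o(μ,ν)` : an optimal plan between `μ` and `ν`. -/
def IsOptPlan {d : ℕ} (π : Measure (Ed d × Ed d)) (μ ν : P2 d) : Prop :=
  IsCoupling π μ ν ∧ ∀ π' : Measure (Ed d × Ed d), IsCoupling π' μ ν → Wcost π ≤ Wcost π'

/-- The closed Wasserstein ball `B_R(m̂)`. -/
def ballW {d : ℕ} (mhat : P2 d) (R : ℝ) : Set (P2 d) := {μ | W2 mhat μ ≤ R}

/-- The open Wasserstein ball `O_R(m̂)`. -/
def oballW {d : ℕ} (mhat : P2 d) (R : ℝ) : Set (P2 d) := {μ | W2 mhat μ < R}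

/-- The Dirac measure at the origin as an element of `P₂(ℝ^d)`. -/
def dirac0 (d : ℕ) : P2 d :=
  ⟨Measure.dirac 0, ⟨by infer_instance, by rw [lintegral_dirac]; simp⟩⟩

/-- The class `UC_m̂` : nonnegative, uniformly continuous on every bounded set,
positive-definite at `m̂`. -/
structure UCmem {d : ℕ} (mhat : P2 d) (φ : P2 d → ℝ) : Prop where
  nonneg : ∀ μ : P2 d, 0 ≤ φ μ
  unif_cont : ∀ R > (0 : ℝ), ∀ η > (0 : ℝ), ∃ δ > (0 : ℝ), ∀ μ ν : P2 d,
    W2 mhat μ ≤ R → W2 mhat ν ≤ R → W2 μ ν ≤ δ → |φ μ - φ ν| ≤ η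
  zero_at : φ mhat = 0
  pos_off : ∀ μ : P2 d, μ ≠ mhat → 0 < φ μ

/-- The inf-convolution `φ_κ`. -/
def infConv {d : ℕ} (φ : P2 d → ℝ) (κ : ℝ) (m : P2 d) : ℝ :=
  ⨅ μ : P2 d, (φ μ + 1 / (2 * κ ^ 2) * W2 m μ ^ 2)

/-- `S(R) = sup_{μ ∈ B_R(m̂)} φ(μ)`. -/
def Sfun {d : ℕ} (mhat : P2 d) (φ : P2 d → ℝ) (R : ℝ) : ℝ := sSup (φ '' ballW mhat R)

/-- `I(R) = inf_{μ ∉ O_R(m̂)} φ(μ)`. -/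
def Ifun {d : ℕ} (mhat : P2 d) (φ : P2 d → ℝ) (R : ℝ) : ℝ := sInf (φ '' (oballW mhat R)ᶜ)

/-- `G_R = {μ : φ(μ) ≤ I(R)/2}`. -/
def Gset {d : ℕ} (mhat : P2 d) (φ : P2 d → ℝ) (R : ℝ) : Set (P2 d) :=
  {μ | φ μ ≤ Ifun mhat φ R / 2}

/-- `G_R^κ = {μ : φ_κ(μ) ≤ I(R)/2}`. -/
def GsetK {d : ℕ} (mhat : P2 d) (φ : P2 d → ℝ) (κ R : ℝ) : Set (P2 d) :=
  {μ | infConv φ κ μ ≤ Ifun mhat φ R / 2}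

/-- `𝓡(R) = sup{r ≥ 0 : B_r(m̂) ⊆ G_R}`. -/
def Rfun {d : ℕ} (mhat : P2 d) (φ : P2 d → ℝ) (R : ℝ) : ℝ :=
  sSup {r : ℝ | 0 ≤ r ∧ ballW mhat r ⊆ Gset mhat φ R}

/-- `M_κ^ε(R) = κ√(2S(R)+ε²κ²) − εκ²`. -/
def Mke {d : ℕ} (mhat : P2 d) (φ : P2 d → ℝ) (κ ε R : ℝ) : ℝ :=
  κ * Real.sqrt (2 * Sfun mhat φ R + ε ^ 2 * κ ^ 2) - ε * κ ^ 2

/-- `M^ε(R) = R + √(2S(R)+ε²)`. -/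
def Me {d : ℕ} (mhat : P2 d) (φ : P2 d → ℝ) (ε R : ℝ) : ℝ :=
  R + Real.sqrt (2 * Sfun mhat φ R + ε ^ 2)

/-- `ω_R^ε(δ)`, the modulus of continuity of `φ` on `B_{M^ε(R)}(m̂)`. -/
def omegaR {d : ℕ} (mhat : P2 d) (φ : P2 d → ℝ) (ε R δ : ℝ) : ℝ :=
  sSup {c : ℝ | ∃ ν₁ ν₂ : P2 d, W2 ν₁ ν₂ ≤ δ ∧ W2 mhat ν₁ ≤ Me mhat φ ε R ∧
    W2 mhat ν₂ ≤ Me mhat φ ε R ∧ c = |φ ν₁ - φ ν₂|}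

/-- `K_κ^ε(R) = εκ² + κ√(ε²κ² + 2ω_R^ε(M_κ^ε(R)))`. -/
def Kke {d : ℕ} (mhat : P2 d) (φ : P2 d → ℝ) (κ ε R : ℝ) : ℝ :=
  ε * κ ^ 2 + κ * Real.sqrt (ε ^ 2 * κ ^ 2 + 2 * omegaR mhat φ ε R (Mke mhat φ κ ε R))

/-- `N_κ^ε(R,m) = εκ√(2φ_κ(m)) + ε·M_κ^ε(R)`. -/
def Nke {d : ℕ} (mhat : P2 d) (φ : P2 d → ℝ) (κ ε R : ℝ) (m : P2 d) : ℝ :=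
  ε * κ * Real.sqrt (2 * infConv φ κ m) + ε * Mke mhat φ κ ε R

/-- `μ̄` is an Ekeland point for `(φ,κ,ε,m)`. -/
def EkelandPt {d : ℕ} (φ : P2 d → ℝ) (κ ε : ℝ) (m μb : P2 d) : Prop :=
  (φ μb + 1 / (2 * κ ^ 2) * W2 m μb ^ 2 ≤ φ m - ε * W2 μb m) ∧
  ∀ μ : P2 d, φ μb + 1 / (2 * κ ^ 2) * W2 m μb ^ 2 ≤
    φ μ + 1 / (2 * κ ^ 2) * W2 m μ ^ 2 + ε * W2 μb μ

/-- The proximal subgradient inequality at `m` with target `μ`, slope measure `α`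
and parameter `σ`. -/
def ProxIneq {d : ℕ} (φ : P2 d → ℝ) (ε σ : ℝ) (m : P2 d)
    (α : Measure (Ed d × Ed d)) (μ : P2 d) : Prop :=
  ∀ β : Measure (Ed d × Ed d × Ed d), IsP2Meas β →
    IsCoupling (β.map fun z => (z.1, z.2.1)) m μ →
    β.map (fun z => (z.1, z.2.2)) = α →
    φ m + ∫ z, ⟪z.2.2, z.2.1 - z.1⟫_ℝ ∂β - σ * ∫ z, ‖z.2.1 - z.1‖ ^ 2 ∂β
      - ε * W2 m μ ≤ φ μ

/-- `α ∈ ∂_P^ε φ(m)` : proximal `ε`-subgradient. -/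
def ProxSubgrad {d : ℕ} (φ : P2 d → ℝ) (ε : ℝ) (m : P2 d)
    (α : Measure (Ed d × Ed d)) : Prop :=
  IsP2Meas α ∧ ∃ σ > (0 : ℝ), ∃ r > (0 : ℝ), ∀ μ : P2 d, W2 m μ ≤ r → ProxIneq φ ε σ m α μ

/-- `(φ,ψ)` is a control-Lyapunov pair at `m̂` for the dynamics `f`, with threshold `ε₀`. -/
structure IsCLP {d : ℕ} {U : Type*} (f : Ed d → P2 d → U → Ed d) (mhat : P2 d)
    (φ : P2 d → ℝ) (ψ : P2 d → ℝ → ℝ) (ε₀ : ℝ) : Prop where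
  phi_uc : UCmem mhat φ
  psi_pos : ∀ (m : P2 d) (ε : ℝ), 0 < ε → 0 < ψ m ε
  psi_cont : ∀ (m : P2 d) (ε : ℝ), 0 < ε → ∀ η > (0 : ℝ), ∃ δ > (0 : ℝ),
    ∀ (m' : P2 d) (ε' : ℝ), 0 < ε' → W2 m m' < δ → |ε - ε'| < δ → |ψ m ε - ψ m' ε'| < η
  level_bdd : ∀ c : ℝ, ∃ K : ℝ, ∀ μ : P2 d, φ μ ≤ c → W2 mhat μ ≤ K
  psi_inf_pos : ∀ r R : ℝ, 0 < r → r < R → ∀ ε > (0 : ℝ), ∃ g > (0 : ℝ),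
    ∀ m : P2 d, W2 mhat m ≤ R → ¬ W2 mhat m < r → g ≤ ψ m ε
  psi_mono : ∀ (m : P2 d) (ε ε' : ℝ), 0 < ε → ε ≤ ε' → ψ m ε ≤ ψ m ε'
  eps0_pos : 0 < ε₀
  decrease : ∀ ε : ℝ, 0 < ε → ε < ε₀ → ∀ (m : P2 d) (α : Measure (Ed d × Ed d)),
    ProxSubgrad φ ε m α → ∃ u : U, ∫ z, ⟪z.2, f z.1 m u⟫_ℝ ∂α ≤ -ψ m ε

/-- A partition of `[0,∞)`. -/
def IsPartition (θ : ℕ → ℝ) : Prop :=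
  θ 0 = 0 ∧ StrictMono θ ∧ Tendsto θ atTop atTop

/-- The steps of the partition `θ` lie in `[δ₁, δ₂]` (i.e. `θ ∈ Θ(δ₁,δ₂)`). -/
def StepIn (θ : ℕ → ℝ) (δ₁ δ₂ : ℝ) : Prop :=
  ∀ i : ℕ, δ₁ ≤ θ (i + 1) - θ i ∧ θ (i + 1) - θ i ≤ δ₂

/-- `W₂`-continuity of a measure-valued curve on `[a,b]`. -/
def W2ContinuousOn {d : ℕ} (m : ℝ → P2 d) (a b : ℝ) : Prop :=
  ∀ t ∈ Icc a b, ∀ η > (0 : ℝ), ∃ δ > (0 : ℝ), ∀ s ∈ Icc a b, |s - t| < δ →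
    W2 (m s) (m t) < η

/-- `m` is a `W₂`-continuous distributional solution of the non-local continuity equation
`∂_t m_t + div(f(x,m_t,u) m_t) = 0` on `[a,b]` with constant control `u`. -/
def SolvesCE {d : ℕ} {U : Type*} (f : Ed d → P2 d → U → Ed d) (u : U)
    (m : ℝ → P2 d) (a b : ℝ) : Prop :=
  W2ContinuousOn m a b ∧
  ∀ χ : Ed d × ℝ → ℝ, ContDiff ℝ (⊤ : ℕ∞) χ → HasCompactSupport χ →
    tsupport χ ⊆ univ ×ˢ Ioo a b →
    ∫ t in a..b, ∫ x, (deriv (fun s : ℝ => χ (x, s)) t +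
      fderiv ℝ (fun y : Ed d => χ (y, t)) x (f x (m t) u)) ∂(m t).1 = 0

/-- A `θ`-trajectory of the controlled continuity equation under the feedback `k`,
starting from `m_*`. -/
def IsTraj {d : ℕ} {U : Type*} (f : Ed d → P2 d → U → Ed d) (k : P2 d → U)
    (θ : ℕ → ℝ) (mstar : P2 d) (m : ℝ → P2 d) : Prop :=
  m 0 = mstar ∧ ∀ i : ℕ, SolvesCE f (k (m (θ i))) m (θ i) (θ (i + 1))

/-- The extremal-shift value `∫ ((x−y)/κ²)·f(x,m,u) dπ(x,y)`. -/
def shiftVal {d : ℕ} {U : Type*} (f : Ed d → P2 d → U → Ed d) (κ : ℝ)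
    (π : Measure (Ed d × Ed d)) (m : P2 d) (u : U) : ℝ :=
  ∫ p, ⟪(κ ^ 2)⁻¹ • (p.1 - p.2), f p.1 m u⟫_ℝ ∂π

/-- `k` is an extremal-shift feedback associated with the plan selection `πsel`. -/
def IsExtremalShift {d : ℕ} {U : Type*} (f : Ed d → P2 d → U → Ed d) (κ : ℝ)
    (πsel : P2 d → Measure (Ed d × Ed d)) (k : P2 d → U) : Prop :=
  ∀ (m : P2 d) (u : U), shiftVal f κ (πsel m) m (k m) ≤ shiftVal f κ (πsel m) m u

/-- `C₂(R)` (computed with time-step bound `δ` and `s = ς₂(m̂)`). -/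
def C2const (C₁ δ s R : ℝ) : ℝ :=
  C₁ * Real.exp (C₁ * δ) * (1 + 2 * (C₁ * δ + s + R) * Real.exp (2 * C₁ * δ))

/-- `C₃(R)` (computed with time-step bound `δ` and `s = ς₂(m̂)`). -/
def C3const (C₀ C₁ δ s R : ℝ) : ℝ :=
  C₀ * (C₁ * Real.exp (C₁ * δ) * (1 + 2 * (C₁ * δ + s + R) * Real.exp (2 * C₁ * δ))
    + C2const C₁ δ s R)

/-- A feedback `k` is s-stabilizing at `m̂`. -/
def SStabilizing {d : ℕ} {U : Type*} (f : Ed d → P2 d → U → Ed d) (mhat : P2 d)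
    (k : P2 d → U) : Prop :=
  ∃ M : ℝ → ℝ, (∀ R > (0 : ℝ), 0 < M R) ∧
    Tendsto M (nhdsWithin 0 (Ioi 0)) (nhds 0) ∧
    ∀ r R : ℝ, 0 < r → r < R → ∃ δ > (0 : ℝ), ∃ T > (0 : ℝ),
      ∀ δhat : ℝ, 0 < δhat → δhat < δ →
      ∀ θ : ℕ → ℝ, IsPartition θ → StepIn θ δhat δ →
      ∀ mstar : P2 d, W2 mhat mstar ≤ R →
      ∀ m : ℝ → P2 d, IsTraj f k θ mstar m →
        (∀ t : ℝ, T ≤ t → W2 mhat (m t) ≤ r) ∧ (∀ t : ℝ, 0 ≤ t → W2 mhat (m t) ≤ M R)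

/-!
By (i), `φ μ̄ ≥ 0` and `φ m ≤ S(R)`, the distance `W = W₂(m, μ̄)` satisfies
`W² / (2κ²) + ε W ≤ S(R)`, and `M_κ^ε(R)` is the positive root of the corresponding quadratic.
The real content is that `S(R)`, an `sSup` in `ℝ` (hence `0` if unbounded), is the supremum of a
bounded set: displacement interpolation along a near-optimal plan joins `m̂` to any `μ` in the
ball by a chain of `⌈(|R| + 1) / δ⌉` steps of length at most `δ` inside a slightly larger ball,
and uniform continuity lets `φ` grow by at most `1` along each step.
-/

section SecondMoment

variable {E F : Type*} [NormedAddCommGroup E] [MeasurableSpace F]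

theorem MeasureTheory.MemLp.lintegral_nnnorm_sq_lt_top {μ : Measure F} {f : F → E}
    (hf : MemLp f 2 μ) : ∫⁻ x, (‖f x‖₊ : ℝ≥0∞) ^ 2 ∂μ < ⊤ := by
  simpa [enorm_eq_nnnorm] using
    lintegral_rpow_enorm_lt_top_of_eLpNorm_lt_top two_ne_zero ENNReal.ofNat_ne_top hf.2

theorem IsP2Meas.memLp_id [MeasurableSpace E] [OpensMeasurableSpace E]
    [SecondCountableTopology E] {μ : Measure E} (h : IsP2Meas μ) : MemLp id 2 μ := by
  refine ⟨aestronglyMeasurable_id, ?_⟩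
  rw [eLpNorm_lt_top_iff_lintegral_rpow_enorm_lt_top two_ne_zero ENNReal.ofNat_ne_top]
  simpa [enorm_eq_nnnorm] using h.2

theorem isP2Meas_map [MeasurableSpace E] [BorelSpace E] {π : Measure F} [IsProbabilityMeasure π]
    {f : F → E} (hf : Measurable f) (hf2 : MemLp f 2 π) : IsP2Meas (π.map f) := by
  refine ⟨Measure.isProbabilityMeasure_map hf.aemeasurable, ?_⟩
  rw [lintegral_map (by fun_prop) hf]
  exact hf2.lintegral_nnnorm_sq_lt_top

end SecondMoment

theorem le_add_mul_of_forall_succ_le {g : ℕ → ℝ} {c : ℝ} {N : ℕ}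
    (h : ∀ k < N, g (k + 1) ≤ g k + c) : g N ≤ g 0 + N * c := by
  induction N with
  | zero => simp
  | succ n ih =>
    push_cast
    linarith [ih fun k hk => h k (by omega), h n (by omega)]

section Wasserstein

variable {d : ℕ}

namespace IsCoupling

variable {π : Measure (Ed d × Ed d)} {μ ν : P2 d}

theorem isProbabilityMeasure (h : IsCoupling π μ ν) : IsProbabilityMeasure π := by
  have : IsProbabilityMeasure μ.1 := μ.2.1
  rw [← h.1] at this
  exact Measure.isProbabilityMeasure_map_iff (by fun_prop) |>.1 this

theorem memLp_fst (h : IsCoupling π μ ν) : MemLp Prod.fst 2 π :=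
  (h.1 ▸ μ.2.memLp_id : MemLp id 2 (π.map Prod.fst)).comp_of_map (by fun_prop)

theorem memLp_snd (h : IsCoupling π μ ν) : MemLp Prod.snd 2 π :=
  (h.2 ▸ ν.2.memLp_id : MemLp id 2 (π.map Prod.snd)).comp_of_map (by fun_prop)

theorem wcost_lt_top (h : IsCoupling π μ ν) : Wcost π < ⊤ :=
  (h.memLp_fst.sub h.memLp_snd).lintegral_nnnorm_sq_lt_top

theorem swap (h : IsCoupling π μ ν) : IsCoupling (π.map Prod.swap) ν μ := by
  constructor
  · rw [Measure.map_map measurable_fst measurable_swap]; exact h.2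
  · rw [Measure.map_map measurable_snd measurable_swap]; exact h.1

end IsCoupling

theorem isCoupling_prod (μ ν : P2 d) : IsCoupling (μ.1.prod ν.1) μ ν := by
  have : IsProbabilityMeasure μ.1 := μ.2.1
  have : IsProbabilityMeasure ν.1 := ν.2.1
  exact ⟨by simp, by simp⟩

theorem wcost_map_swap (π : Measure (Ed d × Ed d)) : Wcost (π.map Prod.swap) = Wcost π := by
  rw [Wcost, lintegral_map (by fun_prop) measurable_swap, Wcost]
  refine lintegral_congr fun p => ?_
  rw [Prod.fst_swap, Prod.snd_swap, ← nnnorm_neg, neg_sub]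

theorem W2_nonneg (μ ν : P2 d) : 0 ≤ W2 μ ν := Real.sqrt_nonneg _

theorem W2_comm (μ ν : P2 d) : W2 μ ν = W2 ν μ := by
  have key : ∀ α β : P2 d,
      (⨅ π ∈ {π | IsCoupling π β α}, Wcost π) ≤ ⨅ π ∈ {π | IsCoupling π α β}, Wcost π :=
    fun α β => le_iInf₂ fun π hπ => wcost_map_swap π ▸ biInf_le _ hπ.swap
  rw [W2, W2, le_antisymm (key ν μ) (key μ ν)]

theorem W2_le_sqrt_wcost {π : Measure (Ed d × Ed d)} {μ ν : P2 d} (h : IsCoupling π μ ν) :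
    W2 μ ν ≤ Real.sqrt (Wcost π).toReal :=
  Real.sqrt_le_sqrt <| ENNReal.toReal_mono h.wcost_lt_top.ne <| biInf_le _ h

theorem exists_isCoupling_wcost_lt (μ ν : P2 d) :
    ∃ π, IsCoupling π μ ν ∧ (Wcost π).toReal < W2 μ ν ^ 2 + 1 := by
  set c := ⨅ π ∈ {π | IsCoupling π μ ν}, Wcost π
  have hprod : μ.1.prod ν.1 ∈ {π | IsCoupling π μ ν} := isCoupling_prod μ ν
  have hc : c ≠ ⊤ := ((biInf_le Wcost hprod).trans_lt hprod.wcost_lt_top).ne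
  have hlt : (⨅ π ∈ {π | IsCoupling π μ ν}, Wcost π) < c + 1 :=
    ENNReal.lt_add_right hc one_ne_zero
  simp only [iInf_lt_iff, exists_prop] at hlt
  obtain ⟨π, hπ, hπc⟩ := hlt
  refine ⟨π, hπ, ?_⟩
  have hW : W2 μ ν ^ 2 = c.toReal := Real.sq_sqrt ENNReal.toReal_nonneg
  have := ENNReal.toReal_strict_mono (ENNReal.add_ne_top.2 ⟨hc, ENNReal.one_ne_top⟩) hπc
  rwa [ENNReal.toReal_add hc ENNReal.one_ne_top, ENNReal.toReal_one, ← hW] at this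

end Wasserstein

section Interpolation

variable {d : ℕ} {π : Measure (Ed d × Ed d)} {μ ν : P2 d}

theorem IsCoupling.isP2Meas_map_interpolate (h : IsCoupling π μ ν) (t : ℝ) :
    IsP2Meas (π.map fun p => (1 - t) • p.1 + t • p.2) :=
  have := h.isProbabilityMeasure
  isP2Meas_map (by fun_prop) ((h.memLp_fst.const_smul (1 - t)).add (h.memLp_snd.const_smul t))

def displacementInterpolation (h : IsCoupling π μ ν) (t : ℝ) : P2 d :=
  ⟨π.map fun p => (1 - t) • p.1 + t • p.2, h.isP2Meas_map_interpolate t⟩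

theorem displacementInterpolation_zero (h : IsCoupling π μ ν) :
    displacementInterpolation h 0 = μ :=
  Subtype.ext <| by simpa [displacementInterpolation] using h.1

theorem displacementInterpolation_one (h : IsCoupling π μ ν) :
    displacementInterpolation h 1 = ν :=
  Subtype.ext <| by simpa [displacementInterpolation] using h.2

theorem W2_displacementInterpolation_le (h : IsCoupling π μ ν) (s t : ℝ) :
    W2 (displacementInterpolation h s) (displacementInterpolation h t) ≤
      |t - s| * Real.sqrt (Wcost π).toReal := by
  let f : ℝ → Ed d × Ed d → Ed d := fun t p => (1 - t) • p.1 + t • p.2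
  have hf : ∀ t, Measurable (f t) := fun t => by fun_prop
  have hρ : IsCoupling (π.map fun p => (f s p, f t p))
      (displacementInterpolation h s) (displacementInterpolation h t) :=
    ⟨by rw [Measure.map_map measurable_fst ((hf s).prodMk (hf t))]; rfl,
      by rw [Measure.map_map measurable_snd ((hf s).prodMk (hf t))]; rfl⟩
  have hcost : Wcost (π.map fun p => (f s p, f t p)) = (‖t - s‖₊ : ℝ≥0∞) ^ 2 * Wcost π := by
    rw [Wcost, lintegral_map (by fun_prop) ((hf s).prodMk (hf t)), Wcost,
      ← lintegral_const_mul _ (by fun_prop)]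
    refine lintegral_congr fun p => ?_
    have : f s p - f t p = (t - s) • (p.1 - p.2) := by simp only [f]; module
    rw [this, nnnorm_smul, ENNReal.coe_mul, mul_pow]
  calc W2 (displacementInterpolation h s) (displacementInterpolation h t)
      ≤ Real.sqrt (Wcost (π.map fun p => (f s p, f t p))).toReal := W2_le_sqrt_wcost hρ
    _ = |t - s| * Real.sqrt (Wcost π).toReal := by
      rw [hcost, ENNReal.toReal_mul, Real.sqrt_mul (by positivity)]
      simp [← ENNReal.coe_pow, Real.sqrt_sq_eq_abs]

end Interpolation

theorem UCmem.bddAbove_image_ballW {d : ℕ} {mhat : P2 d} {φ : P2 d → ℝ} (hφ : UCmem mhat φ)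
    (R : ℝ) : BddAbove (φ '' ballW mhat R) := by
  set ρ := |R| + 1
  obtain ⟨δ, hδ, hφδ⟩ := hφ.unif_cont ρ (by positivity) 1 one_pos
  set N := ⌈ρ / δ⌉₊
  have hN : (0 : ℝ) < N := by exact_mod_cast Nat.ceil_pos.2 (by positivity)
  refine ⟨N, ?_⟩
  rintro _ ⟨μ, hμ, rfl⟩
  obtain ⟨π, hπ, hπcost⟩ := exists_isCoupling_wcost_lt mhat μ
  have hC : Real.sqrt (Wcost π).toReal ≤ ρ := by
    have hW : W2 mhat μ ^ 2 ≤ R ^ 2 := pow_le_pow_left₀ (W2_nonneg mhat μ) hμ 2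
    refine Real.sqrt_le_iff.2 ⟨by positivity, ?_⟩
    nlinarith [sq_abs R, abs_nonneg R]
  let γ : ℕ → P2 d := fun k => displacementInterpolation hπ (k / N)
  have hγ_ball : ∀ k ≤ N, W2 mhat (γ k) ≤ ρ := by
    intro k hk
    have hk1 : (k : ℝ) / N ≤ 1 := div_le_one_of_le₀ (by exact_mod_cast hk) hN.le
    calc W2 mhat (γ k)
        = W2 (displacementInterpolation hπ 0) (γ k) := by rw [displacementInterpolation_zero]
      _ ≤ |(k : ℝ) / N - 0| * Real.sqrt (Wcost π).toReal :=
          W2_displacementInterpolation_le hπ _ _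
      _ ≤ 1 * ρ := by
        rw [sub_zero, abs_of_nonneg (by positivity)]
        gcongr
      _ = ρ := one_mul ρ
  have hγ_step : ∀ k, W2 (γ k) (γ (k + 1)) ≤ δ := by
    intro k
    calc W2 (γ k) (γ (k + 1))
        ≤ |((k + 1 : ℕ) : ℝ) / N - k / N| * Real.sqrt (Wcost π).toReal :=
          W2_displacementInterpolation_le hπ _ _
      _ ≤ 1 / N * ρ := by
        rw [Nat.cast_succ, ← sub_div, add_sub_cancel_left, abs_of_nonneg (by positivity)]
        gcongr
      _ ≤ δ := by
        rw [one_div_mul_eq_div, div_le_iff₀ hN, mul_comm, ← div_le_iff₀ hδ]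
        exact Nat.le_ceil _
  have hchain : φ (γ N) ≤ φ (γ 0) + N * 1 := by
    refine le_add_mul_of_forall_succ_le (g := fun k => φ (γ k)) fun k hk => ?_
    have := hφδ (γ k) (γ (k + 1)) (hγ_ball k hk.le) (hγ_ball (k + 1) hk) (hγ_step k)
    linarith [(abs_le.1 this).1]
  have hγ0 : γ 0 = mhat := by simpa [γ] using displacementInterpolation_zero hπ
  have hγN : γ N = μ := by simpa [γ, hN.ne'] using displacementInterpolation_one hπ
  simpa [hγ0, hγN, hφ.zero_at] using hchain

theorem le_sqrt_sub_of_div_sq_add_mul_le {κ ε W S : ℝ} (hκ : 0 < κ)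
    (h : 1 / (2 * κ ^ 2) * W ^ 2 + ε * W ≤ S) :
    W ≤ κ * Real.sqrt (2 * S + ε ^ 2 * κ ^ 2) - ε * κ ^ 2 := by
  have hsq : (W + ε * κ ^ 2) ^ 2 ≤ κ ^ 2 * (2 * S + ε ^ 2 * κ ^ 2) := by
    have : W ^ 2 + 2 * κ ^ 2 * (ε * W) ≤ 2 * κ ^ 2 * S := by
      have := mul_le_mul_of_nonneg_left h (by positivity : (0 : ℝ) ≤ 2 * κ ^ 2)
      rwa [mul_add, ← mul_assoc, mul_one_div_cancel (by positivity), one_mul] at this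
    nlinarith
  have := (le_abs_self _).trans (Real.abs_le_sqrt hsq)
  rw [Real.sqrt_mul (by positivity), Real.sqrt_sq hκ.le] at this
  linarith

theorem statement3_general {d : ℕ} (mhat : P2 d) (R : ℝ)
    (φ : P2 d → ℝ) (hφ : UCmem mhat φ) (κ ε : ℝ) (hκ : κ ∈ Ioc (0 : ℝ) 1)
    (m : P2 d) (hm : W2 mhat m ≤ R) (μb : P2 d) (hek : EkelandPt φ κ ε m μb) :
    W2 m μb ≤ Mke mhat φ κ ε R := by
  have hφm : φ m ≤ Sfun mhat φ R := le_csSup (hφ.bddAbove_image_ballW R) ⟨m, hm, rfl⟩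
  have hdescent := hek.1
  rw [W2_comm μb m] at hdescent
  exact le_sqrt_sub_of_div_sq_add_mul_le hκ.1 (by linarith [hφ.nonneg μb])

/-- distance estimate for Ekeland points. -/
theorem statement3 {d : ℕ} (mhat : P2 d) (R : ℝ) (hR : 0 < R)
    (φ : P2 d → ℝ) (hφ : UCmem mhat φ) (κ ε : ℝ) (hκ : κ ∈ Ioc (0 : ℝ) 1) (hε : 0 < ε)
    (m : P2 d) (hm : W2 mhat m ≤ R) (μb : P2 d) (hek : EkelandPt φ κ ε m μb) :
    W2 m μb ≤ Mke mhat φ κ ε R :=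
  statement3_general mhat R φ hφ κ ε hκ m hm μb hek
end
end

section
/- Let φ : P₂(ℝ^d) → [0,∞), κ ∈ (0,1], ε > 0, m ∈ P₂(ℝ^d), let μ̄ be an Ekeland point for (φ,κ,ε,m), and let π ∈ Π_o(m,μ̄) be an optimal plan. Define χ_κ(z₁,z₂) = (z₂, (z₁−z₂)/κ²) and γ = (χ_κ)♯π ∈ P₂(ℝ^d×ℝ^d). Then γ is a proximal ε-subgradient of φ at μ̄, i.e. γ ∈ ∂_P^ε φ(μ̄); in fact the defining inequality holds with σ = 1/(2κ²) for all μ ∈ P₂(ℝ^d). -/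
open MeasureTheory Set Filter Topology
open scoped ENNReal NNReal InnerProductSpace

noncomputable section

/-! Write `(x, y, p)` for a point of a plan `β` as in `ProxIneq`. Its `(x, p)`-marginal is
`χ_κ♯π`, so `x + κ²p` has the law of `m` and the law of `(x + κ²p, y)` is a plan between `m`
and `μ`: hence `W₂²(m, μ) ≤ ∫ ‖κ²p − (y − x)‖² dβ`, while optimality of `π` gives
`W₂²(m, μ̄) = ∫ ‖κ²p‖² dβ`. Expanding the square and inserting both into the Ekeland
inequality (ii) yields the proximal inequality with `σ = 1/(2κ²)`, for every `μ`. -/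

lemma memLp_two_iff_lintegral_sq_lt_top {α E : Type*} [MeasurableSpace α] [NormedAddCommGroup E]
    {μ : Measure α} {f : α → E} (hf : AEStronglyMeasurable f μ) :
    MemLp f 2 μ ↔ ∫⁻ a, (‖f a‖₊ : ℝ≥0∞) ^ 2 ∂μ < ⊤ := by
  have hf2 : AEStronglyMeasurable (fun a => ‖f a‖ ^ 2) μ := hf.norm.pow 2
  rw [memLp_two_iff_integrable_sq_norm hf, Integrable, hasFiniteIntegral_iff_enorm]
  simp [hf2, enorm_eq_nnnorm]

section SecondMoment

variable {E : Type*} [NormedAddCommGroup E] [MeasurableSpace E] [BorelSpace E]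
  [SecondCountableTopology E]

lemma isP2Meas_iff {μ : Measure E} : IsP2Meas μ ↔ IsProbabilityMeasure μ ∧ MemLp id 2 μ := by
  rw [IsP2Meas, memLp_two_iff_lintegral_sq_lt_top aestronglyMeasurable_id]
  rfl

lemma isP2Meas_map_s8 {α : Type*} [MeasurableSpace α] {μ : Measure α} [IsProbabilityMeasure μ]
    {f : α → E} (hf : Measurable f) (h : MemLp f 2 μ) : IsP2Meas (μ.map f) :=
  isP2Meas_iff.2 ⟨Measure.isProbabilityMeasure_map hf.aemeasurable,
    (memLp_map_measure_iff aestronglyMeasurable_id hf.aemeasurable).2 h⟩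

end SecondMoment

section Inner

variable {α F : Type*} [MeasurableSpace α] [NormedAddCommGroup F] [InnerProductSpace ℝ F]
  {μ : Measure α} {f g : α → F}

lemma MeasureTheory.MemLp.integrable_inner (hf : MemLp f 2 μ) (hg : MemLp g 2 μ) :
    Integrable (fun a => ⟪f a, g a⟫_ℝ) μ :=
  (L2.integrable_inner (hf.toLp f) (hg.toLp g)).congr <| by
    filter_upwards [hf.coeFn_toLp, hg.coeFn_toLp] with a hfa hga
    rw [hfa, hga]

lemma integral_norm_sub_sq (hf : MemLp f 2 μ) (hg : MemLp g 2 μ) :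
    ∫ a, ‖f a - g a‖ ^ 2 ∂μ =
      ∫ a, ‖f a‖ ^ 2 ∂μ - 2 * ∫ a, ⟪f a, g a⟫_ℝ ∂μ + ∫ a, ‖g a‖ ^ 2 ∂μ := by
  have hff := hf.integrable_norm_pow two_ne_zero
  have hfg := (hf.integrable_inner hg).const_mul 2
  simp_rw [norm_sub_sq_real]
  rw [integral_add _ (hg.integrable_norm_pow two_ne_zero), integral_sub hff hfg,
    integral_const_mul]
  exact hff.sub hfg

end Inner

section Wasserstein

variable {d : ℕ} {μ ν : P2 d} {ρ : Measure (Ed d × Ed d)}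

lemma P2.memLp_id (μ : P2 d) : MemLp id 2 μ.1 := (isP2Meas_iff.1 μ.2).2

lemma IsCoupling.isProbabilityMeasure_s8 (h : IsCoupling ρ μ ν) : IsProbabilityMeasure ρ := by
  have := μ.2.1
  rw [← h.1, Measure.isProbabilityMeasure_map_iff measurable_fst.aemeasurable] at this
  exact this

lemma IsCoupling.memLp_id (h : IsCoupling ρ μ ν) : MemLp id 2 ρ := by
  have hμ := μ.memLp_id
  have hν := ν.memLp_id
  rw [← h.1, memLp_map_measure_iff aestronglyMeasurable_id measurable_fst.aemeasurable] at hμ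
  rw [← h.2, memLp_map_measure_iff aestronglyMeasurable_id measurable_snd.aemeasurable] at hν
  exact MemLp.of_fst_snd ⟨hμ, hν⟩

lemma Wcost_toReal_eq_integral (ρ : Measure (Ed d × Ed d)) :
    (Wcost ρ).toReal = ∫ z, ‖z.1 - z.2‖ ^ 2 ∂ρ := by
  rw [integral_eq_lintegral_of_nonneg_ae (ae_of_all _ fun z => sq_nonneg _) (by fun_prop), Wcost]
  congr 1
  refine lintegral_congr fun z => ?_
  rw [ENNReal.ofReal_pow (norm_nonneg _), ofReal_norm, enorm_eq_nnnorm]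

lemma IsCoupling.wcost_ne_top (h : IsCoupling ρ μ ν) : Wcost ρ ≠ ⊤ :=
  ((memLp_two_iff_lintegral_sq_lt_top (by fun_prop)).1
    (h.memLp_id.fst.sub h.memLp_id.snd)).ne

lemma W2_sq_eq_iInf (μ ν : P2 d) :
    W2 μ ν ^ 2 = (⨅ π ∈ {π : Measure (Ed d × Ed d) | IsCoupling π μ ν}, Wcost π).toReal :=
  Real.sq_sqrt ENNReal.toReal_nonneg

lemma IsCoupling.W2_sq_le (h : IsCoupling ρ μ ν) : W2 μ ν ^ 2 ≤ ∫ z, ‖z.1 - z.2‖ ^ 2 ∂ρ := by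
  rw [W2_sq_eq_iInf, ← Wcost_toReal_eq_integral]
  exact ENNReal.toReal_mono h.wcost_ne_top (iInf₂_le ρ h)

lemma IsOptPlan.W2_sq_eq (h : IsOptPlan ρ μ ν) : W2 μ ν ^ 2 = ∫ z, ‖z.1 - z.2‖ ^ 2 ∂ρ := by
  rw [W2_sq_eq_iInf, ← Wcost_toReal_eq_integral, le_antisymm (iInf₂_le ρ h.1) (le_iInf₂ h.2)]

end Wasserstein

section ProximalSubgradient

variable {d : ℕ} {m μb μ : P2 d} {π : Measure (Ed d × Ed d)}
  {β : Measure (Ed d × Ed d × Ed d)} {c : ℝ}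

/-- The map `χ_κ` of the paper, written with `c = κ²`. -/
def chiMap (c : ℝ) (z : Ed d × Ed d) : Ed d × Ed d := (z.2, c⁻¹ • (z.1 - z.2))

lemma continuous_chiMap (c : ℝ) : Continuous (chiMap (d := d) c) := by
  unfold chiMap
  fun_prop

lemma IsCoupling.isP2Meas_map_chiMap (hπ : IsCoupling π m μb) (c : ℝ) :
    IsP2Meas (π.map (chiMap c)) :=
  haveI := hπ.isProbabilityMeasure_s8
  isP2Meas_map_s8 (continuous_chiMap c).measurable
    (MemLp.of_fst_snd ⟨hπ.memLp_id.snd, (hπ.memLp_id.fst.sub hπ.memLp_id.snd).const_smul c⁻¹⟩)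

lemma integral_norm_smul_slope_sq_eq (hc : c ≠ 0)
    (h13 : β.map (fun z => (z.1, z.2.2)) = π.map (chiMap c)) :
    ∫ z, ‖c • z.2.2‖ ^ 2 ∂β = ∫ z, ‖z.1 - z.2‖ ^ 2 ∂π := by
  have hg : Continuous fun q : Ed d × Ed d => ‖c • q.2‖ ^ 2 := by fun_prop
  have h13m : Measurable fun z : Ed d × Ed d × Ed d => (z.1, z.2.2) := by fun_prop
  calc ∫ z, ‖c • z.2.2‖ ^ 2 ∂β
      = ∫ q, ‖c • q.2‖ ^ 2 ∂(β.map fun z => (z.1, z.2.2)) :=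
        (integral_map h13m.aemeasurable hg.aestronglyMeasurable).symm
    _ = ∫ z, ‖z.1 - z.2‖ ^ 2 ∂π := by
        rw [h13, integral_map (continuous_chiMap c).measurable.aemeasurable hg.aestronglyMeasurable]
        simp [chiMap, smul_smul, hc]

lemma isCoupling_map_shift (hπ : π.map Prod.fst = m.1) (hc : c ≠ 0)
    (h12 : IsCoupling (β.map fun z => (z.1, z.2.1)) μb μ)
    (h13 : β.map (fun z => (z.1, z.2.2)) = π.map (chiMap c)) :
    IsCoupling (β.map fun z => (z.1 + c • z.2.2, z.2.1)) m μ := by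
  have hS : Measurable fun q : Ed d × Ed d => q.1 + c • q.2 := by fun_prop
  constructor
  · rw [Measure.map_map measurable_fst (by fun_prop)]
    calc β.map ((fun q : Ed d × Ed d => q.1 + c • q.2) ∘ fun z => (z.1, z.2.2))
        = (π.map (chiMap c)).map fun q => q.1 + c • q.2 := by
          rw [← h13, Measure.map_map hS (by fun_prop)]
      _ = m.1 := by
          rw [Measure.map_map hS (continuous_chiMap c).measurable, ← hπ]
          congr 1
          funext z
          simp [chiMap, smul_smul, hc]
  · rw [Measure.map_map measurable_snd (by fun_prop), ← h12.2,
      Measure.map_map measurable_snd (by fun_prop)]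
    rfl

theorem EkelandPt.proxIneq {φ : P2 d → ℝ} {κ ε : ℝ} (hek : EkelandPt φ κ ε m μb) (hκ : κ ≠ 0)
    (hπ : IsOptPlan π m μb) (μ : P2 d) :
    ProxIneq φ ε (1 / (2 * κ ^ 2)) μb (π.map (chiMap (κ ^ 2))) μ := by
  intro β hβ h12 h13
  have hc : κ ^ 2 ≠ 0 := pow_ne_zero 2 hκ
  have hβ2 := (isP2Meas_iff.1 hβ).2
  set σ := 1 / (2 * κ ^ 2)
  set A := ∫ z, ‖κ ^ 2 • z.2.2‖ ^ 2 ∂β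
  set I := ∫ z, ⟪z.2.2, z.2.1 - z.1⟫_ℝ ∂β
  set B := ∫ z, ‖z.2.1 - z.1‖ ^ 2 ∂β
  have hWb : W2 m μb ^ 2 = A := by
    rw [hπ.W2_sq_eq]
    exact (integral_norm_smul_slope_sq_eq hc h13).symm
  have hWμ : W2 m μ ^ 2 ≤ A - 2 * κ ^ 2 * I + B :=
    calc W2 m μ ^ 2
        ≤ ∫ z, ‖(z.1 + κ ^ 2 • z.2.2) - z.2.1‖ ^ 2 ∂β := by
          refine (isCoupling_map_shift hπ.1.1 hc h12 h13).W2_sq_le.trans_eq ?_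
          exact integral_map (by fun_prop) (by fun_prop)
      _ = ∫ z, ‖κ ^ 2 • z.2.2 - (z.2.1 - z.1)‖ ^ 2 ∂β := by
          congr 1
          funext z
          abel_nf
      _ = A - 2 * κ ^ 2 * I + B := by
          have hp : MemLp (fun z : Ed d × Ed d × Ed d => κ ^ 2 • z.2.2) 2 β :=
            hβ2.snd.snd.const_smul (κ ^ 2)
          have hq : MemLp (fun z : Ed d × Ed d × Ed d => z.2.1 - z.1) 2 β :=
            hβ2.snd.fst.sub hβ2.fst
          rw [integral_norm_sub_sq hp hq]
          simp_rw [real_inner_smul_left, integral_const_mul]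
          ring
  have hσ : σ * (2 * κ ^ 2) = 1 := one_div_mul_cancel (by positivity)
  calc φ μb + I - σ * B - ε * W2 μb μ
      = φ μb + σ * A - σ * (A - 2 * κ ^ 2 * I + B) - ε * W2 μb μ := by
        linear_combination (-I) * hσ
    _ ≤ φ μb + σ * W2 m μb ^ 2 - σ * W2 m μ ^ 2 - ε * W2 μb μ := by
        rw [hWb]
        gcongr
    _ ≤ φ μ := by linarith [hek.2 μ]

end ProximalSubgradient

theorem statement8_general {d : ℕ} (φ : P2 d → ℝ)
    (κ ε : ℝ) (hκ : κ ∈ Ioc (0 : ℝ) 1)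
    (m μb : P2 d) (hek : EkelandPt φ κ ε m μb)
    (π : Measure (Ed d × Ed d)) (hπ : IsOptPlan π m μb)
    (γ : Measure (Ed d × Ed d))
    (hγ : γ = π.map fun z => (z.2, (κ ^ 2)⁻¹ • (z.1 - z.2))) :
    ProxSubgrad φ ε μb γ ∧ ∀ μ : P2 d, ProxIneq φ ε (1 / (2 * κ ^ 2)) μb γ μ := by
  have hγ' : γ = π.map (chiMap (κ ^ 2)) := hγ
  subst hγ'
  have key := hek.proxIneq hκ.1.ne' hπ
  exact ⟨⟨hπ.1.isP2Meas_map_chiMap _, _, div_pos one_pos (mul_pos two_pos (pow_pos hκ.1 2)), 1, one_pos,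
    fun μ _ => key μ⟩, key⟩

/-- the pushforward of an optimal plan by `χ_κ` is a proximal
`ε`-subgradient at the Ekeland point. -/
theorem statement8 {d : ℕ} (φ : P2 d → ℝ) (hφ : ∀ μ : P2 d, 0 ≤ φ μ)
    (κ ε : ℝ) (hκ : κ ∈ Ioc (0 : ℝ) 1) (hε : 0 < ε)
    (m μb : P2 d) (hek : EkelandPt φ κ ε m μb)
    (π : Measure (Ed d × Ed d)) (hπ : IsOptPlan π m μb)
    (γ : Measure (Ed d × Ed d))
    (hγ : γ = π.map fun z => (z.2, (κ ^ 2)⁻¹ • (z.1 - z.2))) :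
    ProxSubgrad φ ε μb γ ∧ ∀ μ : P2 d, ProxIneq φ ε (1 / (2 * κ ^ 2)) μb γ μ :=
  statement8_general φ κ ε hκ m μb hek π hπ γ hγ
end
end
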